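/- Maximum-loss condition under unitary encoding: Let H be a finite-dimensional complex inner product space, ψ ∈ H a unit vector, K a self-adjoint operator on H, and (P_i)_{i∈ι} a finite family of self-adjoint idempotent operators on H with P_i P_j = 0 for i ≠ j and ∑_i P_i = id; set p_i := ⟨ψ, P_i ψ⟩. Then Bob's quantum Fisher information H_B(K) := 4‖Kψ‖² − 4 ∑_{i : p_i > 0} (Re⟨ψ, P_i K ψ⟩)² / p_i vanishes if and only if for every i, ⟨ψ, (P_i K − K P_i) ψ⟩ = 0 and there exists c_i ∈ ℂ with P_i K ψ = c_i · P_i ψ (the latter condition is equivalent to Kψ lying in the span of the vectors P_i ψ). -/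

import Mathlib

/-!
For an orthogonal projection `P` we have `⟪ψ, P ψ⟫ = ‖P ψ‖²` and `⟪ψ, P (K ψ)⟫ = ⟪P ψ, P (K ψ)⟫`,
and `∑ i, P i = 1` gives `‖K ψ‖² = ∑ i, ‖P i (K ψ)‖²`. Writing `v = P i ψ`, `w = P i (K ψ)`, the
`i`-th summand of the Fisher information is `4 (‖w‖² - (re ⟪v, w⟫)² / ‖v‖²)`, four times the squared
distance from `w` to the real line `ℝ v`. So it vanishes iff each `w` is a real multiple of `v`,
i.e. a complex multiple with `im ⟪v, w⟫ = 0`; and `⟪ψ, (P i K - K P i) ψ⟫ = 2 i · im ⟪v, w⟫`.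
-/

open RCLike ComplexConjugate
open scoped InnerProductSpace

section RealLine

variable {𝕜 E : Type*} [RCLike 𝕜] [NormedAddCommGroup E] [InnerProductSpace 𝕜 E]

theorem norm_sub_re_inner_div_smul_sq (v w : E) :
    ‖w - ((re ⟪v, w⟫_𝕜 / ‖v‖ ^ 2 : ℝ) : 𝕜) • v‖ ^ 2 = ‖w‖ ^ 2 - re ⟪v, w⟫_𝕜 ^ 2 / ‖v‖ ^ 2 := by
  rcases eq_or_ne v 0 with rfl | hv
  · simp
  rw [@norm_sub_sq 𝕜, inner_smul_real_right, norm_smul, RCLike.norm_ofReal, mul_pow, sq_abs,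
    real_smul_eq_coe_mul, re_ofReal_mul, inner_re_symm]
  field_simp
  ring

theorem re_inner_sq_div_le_norm_sq (v w : E) : re ⟪v, w⟫_𝕜 ^ 2 / ‖v‖ ^ 2 ≤ ‖w‖ ^ 2 :=
  sub_nonneg.1 <| norm_sub_re_inner_div_smul_sq (𝕜 := 𝕜) v w ▸ sq_nonneg _

theorem exists_ofReal_smul_iff (v w : E) :
    (∃ t : ℝ, w = (t : 𝕜) • v) ↔ im ⟪v, w⟫_𝕜 = 0 ∧ ∃ c : 𝕜, w = c • v := by
  constructor
  · rintro ⟨t, rfl⟩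
    refine ⟨?_, _, rfl⟩
    rw [inner_smul_real_right, inner_self_eq_norm_sq_to_K, real_smul_eq_coe_mul]
    norm_cast
  · rintro ⟨him, c, rfl⟩
    rcases eq_or_ne v 0 with rfl | hv
    · exact ⟨0, by simp⟩
    have hc : im c = 0 := by
      rw [inner_smul_right, inner_self_eq_norm_sq_to_K, ← ofReal_pow, im_mul_ofReal] at him
      exact (mul_eq_zero.mp him).resolve_right (by positivity)
    exact ⟨re c, by rw [conj_eq_iff_re.mp (conj_eq_iff_im.mpr hc)]⟩

theorem norm_sq_sub_re_inner_sq_div_eq_zero_iff (v w : E) :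
    ‖w‖ ^ 2 - re ⟪v, w⟫_𝕜 ^ 2 / ‖v‖ ^ 2 = 0 ↔ im ⟪v, w⟫_𝕜 = 0 ∧ ∃ c : 𝕜, w = c • v := by
  rw [← norm_sub_re_inner_div_smul_sq, sq_eq_zero_iff, norm_eq_zero, sub_eq_zero,
    ← exists_ofReal_smul_iff]
  refine ⟨fun h => ⟨_, h⟩, ?_⟩
  rintro ⟨t, rfl⟩
  rcases eq_or_ne v 0 with rfl | hv
  · simp
  rw [inner_smul_real_right, inner_self_eq_norm_sq_to_K, real_smul_eq_coe_mul, ← ofReal_pow,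
    ← ofReal_mul, ofReal_re, mul_div_assoc, div_self (by positivity), mul_one]

end RealLine

section Projections

variable {𝕜 E : Type*} [RCLike 𝕜] [NormedAddCommGroup E] [InnerProductSpace 𝕜 E] [CompleteSpace E]

theorem IsSelfAdjoint.inner_apply_apply_eq_conj {A B : E →L[𝕜] E} (hA : IsSelfAdjoint A)
    (hB : IsSelfAdjoint B) (x : E) : ⟪x, A (B x)⟫_𝕜 = conj ⟪x, B (A x)⟫_𝕜 :=
  calc ⟪x, A (B x)⟫_𝕜 = ⟪A x, B x⟫_𝕜 := (hA.isSymmetric x (B x)).symm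
    _ = ⟪B (A x), x⟫_𝕜 := (hB.isSymmetric (A x) x).symm
    _ = conj ⟪x, B (A x)⟫_𝕜 := (inner_conj_symm _ _).symm

theorem IsStarProjection.inner_apply_right {P : E →L[𝕜] E} (hP : IsStarProjection P) (x y : E) :
    ⟪x, P y⟫_𝕜 = ⟪P x, P y⟫_𝕜 :=
  calc ⟪x, P y⟫_𝕜 = ⟪x, (P * P) y⟫_𝕜 := by rw [hP.isIdempotentElem.eq]
    _ = ⟪P x, P y⟫_𝕜 := (hP.isSelfAdjoint.isSymmetric x (P y)).symm

theorem IsStarProjection.re_inner_apply_self {P : E →L[𝕜] E} (hP : IsStarProjection P) (x : E) :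
    re ⟪x, P x⟫_𝕜 = ‖P x‖ ^ 2 := by
  rw [hP.inner_apply_right, inner_self_eq_norm_sq]

theorem norm_sq_eq_sum_norm_sq_apply {ι : Type*} [Fintype ι] {P : ι → E →L[𝕜] E}
    (hP : ∀ i, IsStarProjection (P i)) (hsum : ∑ i, P i = 1) (x : E) :
    ‖x‖ ^ 2 = ∑ i, ‖P i x‖ ^ 2 :=
  calc ‖x‖ ^ 2 = re ⟪x, (∑ i, P i) x⟫_𝕜 := by rw [hsum, one_apply_eq_self, inner_self_eq_norm_sq]
    _ = ∑ i, ‖P i x‖ ^ 2 := by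
      simp only [FunLike.coe_sum, Finset.sum_apply, inner_sum, map_sum, (hP _).re_inner_apply_self]

end Projections

theorem qrf_max_loss_unitary_iff_general
    {H : Type*} [NormedAddCommGroup H] [InnerProductSpace ℂ H] [FiniteDimensional ℂ H]
    {ι : Type*} [Fintype ι]
    (ψ : H)
    (K : H →L[ℂ] H) (hK : IsSelfAdjoint K)
    (P : ι → H →L[ℂ] H)
    (hsa : ∀ i, IsSelfAdjoint (P i))
    (hidem : ∀ i, P i * P i = P i)
    (hsum : ∑ i, P i = 1) :
    (4 * ‖K ψ‖ ^ 2
        - 4 * ∑ i, (if 0 < ((inner ℂ ψ (P i ψ) : ℂ)).re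
            then ((inner ℂ ψ (P i (K ψ)) : ℂ)).re ^ 2 / ((inner ℂ ψ (P i ψ) : ℂ)).re else 0)
      = 0)
    ↔ ∀ i, (inner ℂ ψ (P i (K ψ)) : ℂ) - (inner ℂ ψ (K (P i ψ)) : ℂ) = 0
        ∧ ∃ c : ℂ, P i (K ψ) = c • P i ψ := by
  have hP i : IsStarProjection (P i) := ⟨hidem i, hsa i⟩
  have hterm i : (if 0 < re (inner ℂ ψ (P i ψ))
      then re (inner ℂ ψ (P i (K ψ))) ^ 2 / re (inner ℂ ψ (P i ψ)) else 0)
      = re (inner ℂ (P i ψ) (P i (K ψ))) ^ 2 / ‖P i ψ‖ ^ 2 := by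
    rw [(hP i).re_inner_apply_self, (hP i).inner_apply_right]
    split_ifs with h
    · rfl
    · rw [le_antisymm (not_lt.mp h) (sq_nonneg _), div_zero]
  have hcomm i : inner ℂ ψ (P i (K ψ)) - inner ℂ ψ (K (P i ψ)) = 0 ↔
      im (inner ℂ (P i ψ) (P i (K ψ))) = 0 := by
    rw [hK.inner_apply_apply_eq_conj (hsa i), sub_eq_zero, eq_comm, conj_eq_iff_im,
      (hP i).inner_apply_right]
  simp only [← RCLike.re_to_complex, hterm]
  rw [norm_sq_eq_sum_norm_sq_apply hP hsum, ← mul_sub, ← Finset.sum_sub_distrib, mul_eq_zero,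
    Finset.sum_eq_zero_iff_of_nonneg fun i _ => sub_nonneg.2 (re_inner_sq_div_le_norm_sq _ _)]
  simp only [four_ne_zero, false_or, Finset.mem_univ, true_imp_iff,
    norm_sq_sub_re_inner_sq_div_eq_zero_iff, hcomm]

/-- Maximum-loss condition under unitary encoding: Bob's quantum Fisher
information vanishes if and only if `⟨ψ, (P_i K − K P_i) ψ⟩ = 0` and
`P_i K ψ` is a multiple of `P_i ψ` for every `i`. -/
theorem qrf_max_loss_unitary_iff
    {H : Type*} [NormedAddCommGroup H] [InnerProductSpace ℂ H] [FiniteDimensional ℂ H]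
    {ι : Type*} [Fintype ι]
    (ψ : H) (hψ : ‖ψ‖ = 1)
    (K : H →L[ℂ] H) (hK : IsSelfAdjoint K)
    (P : ι → H →L[ℂ] H)
    (hsa : ∀ i, IsSelfAdjoint (P i))
    (hidem : ∀ i, P i * P i = P i)
    (horth : ∀ i j, i ≠ j → P i * P j = 0)
    (hsum : ∑ i, P i = 1) :
    (4 * ‖K ψ‖ ^ 2
        - 4 * ∑ i, (if 0 < ((inner ℂ ψ (P i ψ) : ℂ)).re
            then ((inner ℂ ψ (P i (K ψ)) : ℂ)).re ^ 2 / ((inner ℂ ψ (P i ψ) : ℂ)).re else 0)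
      = 0)
    ↔ ∀ i, (inner ℂ ψ (P i (K ψ)) : ℂ) - (inner ℂ ψ (K (P i ψ)) : ℂ) = 0
        ∧ ∃ c : ℂ, P i (K ψ) = c • P i ψ :=
  qrf_max_loss_unitary_iff_general ψ K hK P hsa hidem hsum
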